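/- With the grading of the previous statement: let Z_1 ∈ g_{μ_1}, Z_2 ∈ g_{μ_2}, and λ ∈ Λ⁺ with ht(λ) ≤ ht(μ_1) + ht(μ_2), where ht is the additive height function on roots. Then the g_λ-component of e^{ad(−Z_2)}e^{ad(−Z_1)}e^{ad Z_2}e^{ad Z_1}(Y) equals Y_λ; i.e., conjugating by the commutator [exp Z_1, exp Z_2] leaves all entries of height ≤ ht(μ_1)+ht(μ_2) unchanged. -/

import Mathlib

/-!
Filter `L` by height, `F h = ⨁_{ht λ ≥ h} g_λ`. For `Z ∈ g_μ`, `ad Z` raises the filtration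
degree by `ht μ`, so `a := e^{ad Z₁} - 1` and `b := e^{ad Z₂} - 1` raise it by `ht μ₁` and `ht μ₂`
respectively. The commutator of `e^{ad Z₂}` and `e^{ad Z₁}` is `ba - ab`, which raises it by
`ht μ₁ + ht μ₂`; since `e^{ad(-Z)}` inverts `e^{ad Z}`,
`W - Y = e^{ad(-Z₂)}e^{ad(-Z₁)}(ba - ab) Y`, and `Y ∈ F 1` puts this in
`F (ht μ₁ + ht μ₂ + 1)`.
-/

open Finset

section FiltrationShift

variable {R M : Type*} [CommRing R] [AddCommGroup M] [Module R M]

def filtrationShift (F : ℕ → Submodule R M) (d : ℕ) : Submodule R (Module.End R M) where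
  carrier := {f | ∀ h, ∀ x ∈ F h, f x ∈ F (h + d)}
  zero_mem' _ _ _ := zero_mem _
  add_mem' hf hg h x hx := add_mem (hf h x hx) (hg h x hx)
  smul_mem' c _ hf h x hx := Submodule.smul_mem _ c (hf h x hx)

variable {F : ℕ → Submodule R M} {d e : ℕ} {f f' : Module.End R M}

theorem one_mem_filtrationShift : (1 : Module.End R M) ∈ filtrationShift F 0 :=
  fun _ _ hx => hx

theorem mul_mem_filtrationShift (hf : f ∈ filtrationShift F d) (hf' : f' ∈ filtrationShift F e) :
    f * f' ∈ filtrationShift F (d + e) := by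
  intro h x hx
  rw [show h + (d + e) = h + e + d by omega]
  exact hf _ _ (hf' h x hx)

theorem pow_mem_filtrationShift (hf : f ∈ filtrationShift F d) (r : ℕ) :
    f ^ r ∈ filtrationShift F (r * d) := by
  induction r with
  | zero => simpa using one_mem_filtrationShift
  | succ r ih => simpa [pow_succ, add_mul] using mul_mem_filtrationShift ih hf

theorem filtrationShift_anti (hF : Antitone F) (hde : d ≤ e) :
    filtrationShift F e ≤ filtrationShift F d :=
  fun _ hf h x hx => hF (by omega) (hf h x hx)

theorem commutator_mem_filtrationShift {a b : Module.End R M}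
    (ha : a - 1 ∈ filtrationShift F d) (hb : b - 1 ∈ filtrationShift F e) :
    a * b - b * a ∈ filtrationShift F (d + e) := by
  have key : a * b - b * a = (a - 1) * (b - 1) - (b - 1) * (a - 1) := by noncomm_ring
  rw [key]
  exact sub_mem (mul_mem_filtrationShift ha hb) (add_comm e d ▸ mul_mem_filtrationShift hb ha)

theorem conj_commutator_sub_one_mem_filtrationShift {a a' b b' : Module.End R M}
    (ha' : a' * a = 1) (hb' : b' * b = 1)
    (ha : a - 1 ∈ filtrationShift F d) (hb : b - 1 ∈ filtrationShift F e)
    (ha'F : a' ∈ filtrationShift F 0) (hb'F : b' ∈ filtrationShift F 0) :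
    b' * a' * (b * a) - 1 ∈ filtrationShift F (e + d) := by
  have key : b' * a' * (b * a) - 1 = b' * a' * (b * a - a * b) := by
    rw [mul_sub, ← mul_assoc (b' * a') a, mul_assoc b' a' a, ha', mul_one, hb']
  rw [key]
  simpa using mul_mem_filtrationShift (mul_mem_filtrationShift hb'F ha'F)
    (commutator_mem_filtrationShift hb ha)

end FiltrationShift

section TruncExp

open scoped Nat

variable {R M : Type*} [Field R] [AddCommGroup M] [Module R M]

noncomputable def truncExp (m : ℕ) (f : Module.End R M) : Module.End R M :=
  ∑ r ∈ range m, ((r ! : R))⁻¹ • f ^ r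

variable {m : ℕ} {f : Module.End R M}

theorem truncExp_neg_mul_truncExp [CharZero R] (hf : f ^ m = 0) :
    truncExp m (-f) * truncExp m f = 1 := by
  -- `IsNilpotent.exp` needs a `ℚ`-module structure, which we borrow from `R`.
  let := Module.compHom (Module.End R M) (algebraMap ℚ R)
  have h_exp {a : Module.End R M} (ha : a ^ m = 0) : truncExp m a = IsNilpotent.exp a := by
    rw [IsNilpotent.exp_eq_sum ha, truncExp]
    refine sum_congr rfl fun r _ => ?_
    change _ = algebraMap ℚ R (r ! : ℚ)⁻¹ • a ^ r
    rw [map_inv₀, map_natCast]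
  have hf' : (-f) ^ m = 0 := by rw [neg_pow, hf, mul_zero]
  rw [h_exp hf, h_exp hf', IsNilpotent.exp_neg_mul_exp_self ⟨m, hf⟩]

theorem truncExp_sub_one_mem_filtrationShift {F : ℕ → Submodule R M} {d : ℕ} (hF : Antitone F)
    (hfF : f ∈ filtrationShift F d) (hf : f ^ m = 0) :
    truncExp m f - 1 ∈ filtrationShift F d := by
  have hsucc : truncExp m f = truncExp (m + 1) f := by
    rw [truncExp, truncExp, sum_range_succ, hf, smul_zero, add_zero]
  rw [hsucc, truncExp, sum_range_succ']
  simp only [Nat.factorial_zero, Nat.cast_one, inv_one, pow_zero, one_smul, add_sub_cancel_right]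
  exact sum_mem fun r _ => Submodule.smul_mem _ _ <|
    filtrationShift_anti hF (Nat.le_mul_of_pos_left d r.succ_pos) (pow_mem_filtrationShift hfF _)

theorem truncExp_mem_filtrationShift_zero {F : ℕ → Submodule R M} {d : ℕ} (hF : Antitone F)
    (hfF : f ∈ filtrationShift F d) : truncExp m f ∈ filtrationShift F 0 :=
  sum_mem fun r _ => Submodule.smul_mem _ _ <|
    filtrationShift_anti hF (Nat.zero_le _) (pow_mem_filtrationShift hfF r)

theorem truncExp_ad_apply {L : Type*} [LieRing L] [LieAlgebra R L] (A x : L) :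
    truncExp m (LieAlgebra.ad R L A) x =
      ∑ r ∈ range m, ((r ! : R))⁻¹ • (fun w => ⁅A, w⁆)^[r] x := by
  simp only [truncExp, LinearMap.sum_apply, LinearMap.smul_apply, Module.End.pow_apply]
  rfl

end TruncExp

section HeightFiltration

variable {R V L : Type*} [CommRing R] [LieRing L] [LieAlgebra R L]
  (Λp : Finset V) (g : V → Submodule R L) (ht : V → ℕ)

def heightFiltration (h : ℕ) : Submodule R L :=
  ⨆ l ∈ {l ∈ Λp | h ≤ ht l}, g l

variable {Λp g ht}

theorem le_heightFiltration {l : V} {h : ℕ} (hl : l ∈ Λp) (hh : h ≤ ht l) :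
    g l ≤ heightFiltration Λp g ht h :=
  le_iSup₂ (f := fun l (_ : l ∈ {l ∈ Λp | h ≤ ht l}) => g l) l (mem_filter.2 ⟨hl, hh⟩)

theorem heightFiltration_antitone : Antitone (heightFiltration Λp g ht) := by
  intro h h' hh
  refine iSup₂_le fun l hl => ?_
  obtain ⟨hlΛ, hl'⟩ := mem_filter.1 hl
  exact le_heightFiltration hlΛ (hh.trans hl')

theorem ad_mem_filtrationShift_heightFiltration [AddCommMonoid V]
    (hbr : ∀ a b : V, a ∈ Λp → b ∈ Λp → ∀ x ∈ g a, ∀ y ∈ g b,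
      (a + b ∈ Λp → ⁅x, y⁆ ∈ g (a + b)) ∧ (a + b ∉ Λp → ⁅x, y⁆ = (0 : L)))
    (htadd : ∀ a b : V, ht (a + b) = ht a + ht b)
    {ν : V} (hν : ν ∈ Λp) {Z : L} (hZ : Z ∈ g ν) :
    LieAlgebra.ad R L Z ∈ filtrationShift (heightFiltration Λp g ht) (ht ν) := by
  intro h x hx
  suffices heightFiltration Λp g ht h ≤
      (heightFiltration Λp g ht (h + ht ν)).comap (LieAlgebra.ad R L Z) from this hx
  refine iSup₂_le fun l hl y hy => ?_
  obtain ⟨hlΛ, hhl⟩ := mem_filter.1 hl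
  obtain ⟨hin, hout⟩ := hbr ν l hν hlΛ Z hZ y hy
  by_cases hmem : ν + l ∈ Λp
  · exact le_heightFiltration hmem (by rw [htadd]; omega) (hin hmem)
  · simp [hout hmem]

theorem exists_sum_of_mem_heightFiltration {h : ℕ} {x : L}
    (hx : x ∈ heightFiltration Λp g ht h) :
    ∃ c : V → L, (∀ l ∈ Λp, c l ∈ g l) ∧ x = ∑ l ∈ Λp, c l ∧ ∀ l ∈ Λp, ht l < h → c l = 0 := by
  classical
  obtain ⟨c, rfl⟩ := (Submodule.mem_iSup_finset_iff_exists_sum _ _).1 hx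
  refine ⟨fun l => if h ≤ ht l then (c l : L) else 0, fun l _ => ?_, ?_,
    fun l _ hl => if_neg (by omega)⟩
  · dsimp only
    split_ifs
    exacts [(c l).2, zero_mem _]
  · rw [sum_filter]

end HeightFiltration

/-- In a nilpotent Lie algebra graded by positive roots with an additive height
function, conjugating `Y = ∑ Y_λ` by the commutator `[exp Z₁, exp Z₂]` (that is,
applying `e^{ad(−Z₂)}e^{ad(−Z₁)}e^{ad Z₂}e^{ad Z₁}`) leaves all components of height
at most `ht μ₁ + ht μ₂` unchanged. -/
theorem stmt_11 (V : Type*) [AddCommMonoid V]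
    (L : Type*) [LieRing L] [LieAlgebra ℝ L]
    (Λp : Finset V) (g : V → Submodule ℝ L)
    (hbr : ∀ a b : V, a ∈ Λp → b ∈ Λp → ∀ x ∈ g a, ∀ y ∈ g b,
      (a + b ∈ Λp → ⁅x, y⁆ ∈ g (a + b)) ∧ (a + b ∉ Λp → ⁅x, y⁆ = (0 : L)))
    (ht : V → ℕ) (htadd : ∀ a b : V, ht (a + b) = ht a + ht b)
    (htpos : ∀ l ∈ Λp, 1 ≤ ht l)
    (Yc : V → L) (hYc : ∀ l ∈ Λp, Yc l ∈ g l)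
    (μ₁ μ₂ : V) (hμ₁ : μ₁ ∈ Λp) (hμ₂ : μ₂ ∈ Λp)
    (Z₁ Z₂ : L) (hZ₁ : Z₁ ∈ g μ₁) (hZ₂ : Z₂ ∈ g μ₂)
    (m : ℕ)
    (hnil₁ : ∀ w : L, (fun w => ⁅Z₁, w⁆)^[m] w = 0)
    (hnil₂ : ∀ w : L, (fun w => ⁅Z₂, w⁆)^[m] w = 0) :
    let E : L → L → L := fun A W =>
      ∑ r ∈ Finset.range m, ((r.factorial : ℝ))⁻¹ • (fun w => ⁅A, w⁆)^[r] W
    let Y : L := ∑ l ∈ Λp, Yc l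
    let W : L := E (-Z₂) (E (-Z₁) (E Z₂ (E Z₁ Y)))
    ∃ C : V → L, (∀ l ∈ Λp, C l ∈ g l) ∧ W = ∑ l ∈ Λp, C l ∧
      ∀ l ∈ Λp, ht l ≤ ht μ₁ + ht μ₂ → C l = Yc l := by
  intro E Y W
  have hE (A x : L) : E A x = truncExp m (LieAlgebra.ad ℝ L A) x := (truncExp_ad_apply A x).symm
  have hn₁ : LieAlgebra.ad ℝ L Z₁ ^ m = 0 :=
    LinearMap.ext fun w => (Module.End.pow_apply _ _ _).trans (hnil₁ w)
  have hn₂ : LieAlgebra.ad ℝ L Z₂ ^ m = 0 :=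
    LinearMap.ext fun w => (Module.End.pow_apply _ _ _).trans (hnil₂ w)
  have hF : Antitone (heightFiltration Λp g ht) := heightFiltration_antitone
  have had₁ := ad_mem_filtrationShift_heightFiltration hbr htadd hμ₁ hZ₁
  have had₂ := ad_mem_filtrationShift_heightFiltration hbr htadd hμ₂ hZ₂
  have hconj := conj_commutator_sub_one_mem_filtrationShift
    (truncExp_neg_mul_truncExp hn₁) (truncExp_neg_mul_truncExp hn₂)
    (truncExp_sub_one_mem_filtrationShift hF had₁ hn₁)
    (truncExp_sub_one_mem_filtrationShift hF had₂ hn₂)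
    (truncExp_mem_filtrationShift_zero hF (neg_mem had₁))
    (truncExp_mem_filtrationShift_zero hF (neg_mem had₂))
  have hY : Y ∈ heightFiltration Λp g ht 1 :=
    sum_mem fun l hl => le_heightFiltration hl (htpos l hl) (hYc l hl)
  have hWY : W - Y ∈ heightFiltration Λp g ht (1 + (ht μ₂ + ht μ₁)) := by
    simpa [W, hE] using hconj 1 Y hY
  obtain ⟨c, hcg, hcsum, hc0⟩ := exists_sum_of_mem_heightFiltration hWY
  refine ⟨Yc + c, fun l hl => add_mem (hYc l hl) (hcg l hl), ?_, fun l hl hle => ?_⟩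
  · rw [Pi.add_def, sum_add_distrib, ← hcsum, add_sub_cancel]
  · rw [Pi.add_apply, hc0 l hl (by omega), add_zero]
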